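/- Let (Λ^{(k)})_{k∈ℕ} be a sequence in ℓ¹(ℕ×ℕ) converging in ℓ¹-norm to Λ. Then S(Λ) ⊆ ⋃_{N∈ℕ} ⋂_{k≥N} S(Λ^{(k)}), i.e. every pair (n,m) with α^ν_{n,m}(Λ) > 0 satisfies α^ν_{n,m}(Λ^{(k)}) > 0 for all sufficiently large k. -/

import Mathlib

open scoped BigOperators
open Filter

/-- A set `R ⊆ ℕ` is upward closed w.r.t. the relation `r`. -/
def UpClosed (r : ℕ → ℕ → Prop) (R : Set ℕ) : Prop :=
  ∀ x ∈ R, ∀ y, r x y → y ∈ R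

/-- The family `𝓡_{n,m}` of upward closed sets containing `m` but not `n`. -/
def Rfam (r : ℕ → ℕ → Prop) (n m : ℕ) : Set (Set ℕ) :=
  {R | UpClosed r R ∧ n ∉ R ∧ m ∈ R}

/-- The `l`-th column sum `λ_{*,l}` of a matrix. -/
noncomputable def colSum (Λ : ℕ × ℕ → ℝ) (l : ℕ) : ℝ := ∑' k, Λ (k, l)

/-- Sum of a sequence over a subset of `ℕ`. -/
noncomputable def setSum (f : ℕ → ℝ) (R : Set ℕ) : ℝ := ∑' l : R, f l

/-- `inf_{R ∈ 𝓡_{n,m}} ∑_{l∈R} (ν_l − λ_{*,l})`. -/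
noncomputable def infR (r : ℕ → ℕ → Prop) (ν : ℕ → ℝ) (Λ : ℕ × ℕ → ℝ) (n m : ℕ) : ℝ :=
  sInf ((fun R => setSum (fun l => ν l - colSum Λ l) R) '' Rfam r n m)

open Classical in
/-- The correction term of Nawrotzki's algorithm. -/
noncomputable def alpha (r : ℕ → ℕ → Prop) (ν : ℕ → ℝ) (n m : ℕ) (Λ : ℕ × ℕ → ℝ) : ℝ :=
  if r n m then
    (if 0 < min (colSum Λ n - ν n) (min (ν m - colSum Λ m) (infR r ν Λ n m))
      then min (colSum Λ n - ν n) (min (ν m - colSum Λ m) (infR r ν Λ n m)) else 0)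
  else 0

/-- The Nawrotzki update map `Φ^ν_{n,m}`. -/
noncomputable def Phi (r : ℕ → ℕ → Prop) (ν : ℕ → ℝ) (n m : ℕ) (Λ : ℕ × ℕ → ℝ) :
    ℕ × ℕ → ℝ :=
  fun p => if p = (n, n) then Λ p - alpha r ν n m Λ
    else if p = (n, m) then Λ p + alpha r ν n m Λ
    else Λ p

/-- The set `S(Λ)` of pairs where the correction term is positive. -/
def Sset (r : ℕ → ℕ → Prop) (ν : ℕ → ℝ) (Λ : ℕ × ℕ → ℝ) : Set (ℕ × ℕ) :=
  {p | 0 < alpha r ν p.1 p.2 Λ}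

/-- The diagonal matrix built from a sequence. -/
noncomputable def diagMat (μ : ℕ → ℝ) : ℕ × ℕ → ℝ :=
  fun p => if p.1 = p.2 then μ p.1 else 0

/-! Each of the three quantities whose minimum defines `α^ν_{n,m}(Λ)` moves by at most
`‖Λ' - Λ‖₁` when `Λ` is replaced by `Λ'`: a column sum, and every `∑_{l∈R} (ν_l − λ_{*,l})`,
changes by at most `∑_l |λ'_{*,l} − λ_{*,l}| ≤ ‖Λ' - Λ‖₁`. So if all three are positive at `Λ`,
they stay positive once `‖Λ^{(k)} - Λ‖₁` is below their minimum. -/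

lemma summable_abs_sub {ι : Type*} {f g : ι → ℝ} (hf : Summable fun i => |f i|)
    (hg : Summable fun i => |g i|) : Summable fun i => |f i - g i| :=
  .of_nonneg_of_le (fun _ => abs_nonneg _) (fun i => abs_sub (f i) (g i)) (hf.add hg)

section ColumnSums

variable {Λ Λ' : ℕ × ℕ → ℝ}

lemma summable_abs_col (hΛ : Summable fun p => |Λ p|) (l : ℕ) :
    Summable fun k => |Λ (k, l)| :=
  hΛ.comp_injective fun _ _ h => (Prod.ext_iff.1 h).1

lemma abs_colSum_le (hΛ : Summable fun p => |Λ p|) (l : ℕ) :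
    |colSum Λ l| ≤ ∑' k, |Λ (k, l)| := by
  simpa only [colSum, Real.norm_eq_abs] using
    norm_tsum_le_tsum_norm (f := fun k => Λ (k, l)) (by simpa using summable_abs_col hΛ l)

lemma summable_abs_comp_swap (hΛ : Summable fun p => |Λ p|) :
    Summable fun q : ℕ × ℕ => |Λ q.swap| :=
  (Equiv.prodComm ℕ ℕ).summable_iff.2 hΛ

lemma summable_abs_colSum (hΛ : Summable fun p => |Λ p|) : Summable fun l => |colSum Λ l| :=
  .of_nonneg_of_le (fun _ => abs_nonneg _) (abs_colSum_le hΛ) (summable_abs_comp_swap hΛ).prod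

lemma tsum_abs_colSum_le (hΛ : Summable fun p => |Λ p|) :
    ∑' l, |colSum Λ l| ≤ ∑' p, |Λ p| := by
  have hswap := summable_abs_comp_swap hΛ
  calc ∑' l, |colSum Λ l| ≤ ∑' l, ∑' k, |Λ (k, l)| :=
        (summable_abs_colSum hΛ).tsum_le_tsum (abs_colSum_le hΛ) hswap.prod
    _ = ∑' q : ℕ × ℕ, |Λ q.swap| := (hswap.tsum_prod).symm
    _ = ∑' p, |Λ p| := (Equiv.prodComm ℕ ℕ).tsum_eq fun p => |Λ p|

lemma colSum_sub (hΛ' : Summable fun p => |Λ' p|) (hΛ : Summable fun p => |Λ p|) (l : ℕ) :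
    colSum (Λ' - Λ) l = colSum Λ' l - colSum Λ l :=
  (summable_abs_col hΛ' l).of_abs.tsum_sub (summable_abs_col hΛ l).of_abs

lemma abs_colSum_sub_le (hΛ' : Summable fun p => |Λ' p|) (hΛ : Summable fun p => |Λ p|)
    (l : ℕ) : |colSum Λ' l - colSum Λ l| ≤ ∑' p, |Λ' p - Λ p| := by
  have hD : Summable fun p => |(Λ' - Λ) p| := summable_abs_sub hΛ' hΛ
  rw [← colSum_sub hΛ' hΛ]
  exact ((summable_abs_colSum hD).le_tsum l fun _ _ => abs_nonneg _).trans
    (tsum_abs_colSum_le hD)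

end ColumnSums

lemma abs_setSum_le {f : ℕ → ℝ} (hf : Summable fun l => |f l|) (R : Set ℕ) :
    |setSum f R| ≤ ∑' l, |f l| := by
  have hR : |setSum f R| ≤ ∑' l : R, |f l| := by
    simpa only [setSum, Real.norm_eq_abs] using
      norm_tsum_le_tsum_norm (f := fun l : R => f l) (by exact hf.subtype R)
  exact hR.trans (hf.tsum_subtype_le (fun l => |f l|) R fun _ => abs_nonneg _)

lemma abs_setSum_sub_setSum_le {f g : ℕ → ℝ} (hf : Summable fun l => |f l|)
    (hg : Summable fun l => |g l|) (R : Set ℕ) :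
    |setSum f R - setSum g R| ≤ ∑' l, |f l - g l| := by
  have hsub : setSum f R - setSum g R = setSum (f - g) R :=
    ((hf.of_abs.subtype R).tsum_sub (hg.of_abs.subtype R)).symm
  rw [hsub]
  exact abs_setSum_le (summable_abs_sub hf hg) R

lemma sub_le_csInf_image {α : Type*} {s : Set α} {f g : α → ℝ} {ε : ℝ} (hε : 0 ≤ ε)
    (hg : BddBelow (g '' s)) (hfg : ∀ x ∈ s, g x - ε ≤ f x) :
    sInf (g '' s) - ε ≤ sInf (f '' s) := by
  rcases s.eq_empty_or_nonempty with rfl | hs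
  · simp [hε] -- `sInf ∅ = 0` for real numbers, whence the hypothesis `0 ≤ ε`
  · refine le_csInf (hs.image f) ?_
    rintro _ ⟨x, hx, rfl⟩
    linarith [csInf_le hg ⟨x, hx, rfl⟩, hfg x hx]

lemma infR_sub_le (r : ℕ → ℕ → Prop) {ν : ℕ → ℝ} (hν : Summable fun l => |ν l|)
    {Λ Λ' : ℕ × ℕ → ℝ} (hΛ : Summable fun p => |Λ p|) (hΛ' : Summable fun p => |Λ' p|)
    (n m : ℕ) : infR r ν Λ n m - ∑' p, |Λ' p - Λ p| ≤ infR r ν Λ' n m := by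
  have hgap : Summable fun l => |ν l - colSum Λ l| := summable_abs_sub hν (summable_abs_colSum hΛ)
  have hgap' : Summable fun l => |ν l - colSum Λ' l| :=
    summable_abs_sub hν (summable_abs_colSum hΛ')
  refine sub_le_csInf_image (tsum_nonneg fun _ => abs_nonneg _) ?_ fun R _ => ?_
  · refine ⟨-∑' l, |ν l - colSum Λ l|, ?_⟩
    rintro _ ⟨R, -, rfl⟩
    linarith [neg_abs_le (setSum (fun l => ν l - colSum Λ l) R), abs_setSum_le hgap R]
  · have hcols : ∑' l, |(ν l - colSum Λ l) - (ν l - colSum Λ' l)| ≤ ∑' p, |Λ' p - Λ p| := by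
      have hD : Summable fun p => |(Λ' - Λ) p| := summable_abs_sub hΛ' hΛ
      simp_rw [sub_sub_sub_cancel_left, ← colSum_sub hΛ' hΛ]
      exact tsum_abs_colSum_le hD
    linarith [(abs_le.1 ((abs_setSum_sub_setSum_le hgap hgap' R).trans hcols)).2]

lemma alpha_pos_iff {r : ℕ → ℕ → Prop} {ν : ℕ → ℝ} {n m : ℕ} {Λ : ℕ × ℕ → ℝ} :
    0 < alpha r ν n m Λ ↔
      r n m ∧ 0 < colSum Λ n - ν n ∧ 0 < ν m - colSum Λ m ∧ 0 < infR r ν Λ n m := by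
  unfold alpha
  split_ifs with hr hpos <;> simp_all

theorem Sset_limit_subset (r : ℕ → ℕ → Prop)
    (ν : ℕ → ℝ) (hν : Summable fun n => |ν n|)
    (Ls : ℕ → ℕ × ℕ → ℝ) (Λ : ℕ × ℕ → ℝ)
    (hs : ∀ k, Summable fun p => |Ls k p|)
    (hΛ : Summable fun p => |Λ p|)
    (hconv : Tendsto (fun k => ∑' p, |Ls k p - Λ p|) atTop (nhds 0)) :
    ∀ p ∈ Sset r ν Λ, ∃ N, ∀ k ≥ N, p ∈ Sset r ν (Ls k) := by
  rintro ⟨n, m⟩ hp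
  obtain ⟨hr, hn, hm, hR⟩ := alpha_pos_iff.1 hp
  obtain ⟨N, hN⟩ := eventually_atTop.1 <|
    ((hconv.eventually (gt_mem_nhds hn)).and (hconv.eventually (gt_mem_nhds hm))).and
      (hconv.eventually (gt_mem_nhds hR))
  refine ⟨N, fun k hk => alpha_pos_iff.2 ⟨hr, ?_, ?_, ?_⟩⟩ <;>
    obtain ⟨⟨hεn, hεm⟩, hεR⟩ := hN k hk
  · linarith [(abs_le.1 (abs_colSum_sub_le (hs k) hΛ n)).1]
  · linarith [(abs_le.1 (abs_colSum_sub_le (hs k) hΛ m)).2]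
  · linarith [infR_sub_le r hν hΛ (hs k) n m]
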